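/- arXiv:1410.6054 — 5 statements merged into one kernel-verified Lean document; each statement's English description precedes it below -/
import Mathlib

section
/- Let X be a poset. If X is well-founded (has no infinite strictly decreasing sequence) and X is not noetherian (i.e., there exists a sequence x_1, x_2, … with x_i ≰ x_j for all i < j), then there exists a minimal bad sequence: a bad sequence x_1, x_2, … such that for every n there is no bad sequence x_1, …, x_{n-1}, y_n, y_{n+1}, … with y_n < x_n. -/
/-!
By well-foundedness, among the bad sequences agreeing with a given bad sequence before `n`
there is one whose `n`-th term is minimal. Starting from any bad sequence, minimise at
positions `0, 1, 2, …` in turn; step `n` does not touch the terms before `n`, so the diagonal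
sequence agrees up to `n` with the sequence produced at step `n`, and is therefore bad and
minimal at every position.
-/

/-- A sequence in a poset is *bad* if `x i ≤ x j` fails whenever `i < j`. -/
def IsBadSeq {X : Type*} [PartialOrder X] (x : ℕ → X) : Prop :=
  ∀ i j : ℕ, i < j → ¬ x i ≤ x j

section MinimalBad

variable {X : Type*} [PartialOrder X]

def IsMinimalBadAt (n : ℕ) (x : ℕ → X) : Prop :=
  ∀ y : ℕ → X, (∀ i < n, y i = x i) → y n < x n → ¬ IsBadSeq y

theorem isMinimalBadAt_congr {n : ℕ} {x y : ℕ → X} (h : ∀ i ≤ n, x i = y i) :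
    IsMinimalBadAt n x ↔ IsMinimalBadAt n y := by
  have hn : x n = y n := h n le_rfl
  have hlt : ∀ z : ℕ → X, (∀ i < n, z i = x i) ↔ (∀ i < n, z i = y i) := fun z =>
    forall₂_congr fun i hi => by rw [h i hi.le]
  simp only [IsMinimalBadAt, hlt, hn]

theorem exists_isMinimalBadAt (hwf : WellFounded ((· < ·) : X → X → Prop)) {f : ℕ → X}
    (hf : IsBadSeq f) (n : ℕ) :
    ∃ g : ℕ → X, (∀ i < n, g i = f i) ∧ IsBadSeq g ∧ IsMinimalBadAt n g := by
  let S : Set X := {a | ∃ g : ℕ → X, (∀ i < n, g i = f i) ∧ IsBadSeq g ∧ g n = a}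
  obtain ⟨_, ⟨g, hgf, hg, rfl⟩, hmin⟩ := hwf.has_min S ⟨f n, f, fun _ _ => rfl, hf, rfl⟩
  exact ⟨g, hgf, hg, fun y hyg hlt hy =>
    hmin (y n) ⟨y, fun i hi => (hyg i hi).trans (hgf i hi), hy, rfl⟩ hlt⟩

end MinimalBad

theorem eq_diag_of_forall_lt_succ_eq {α : Type*} (F : ℕ → ℕ → α)
    (hF : ∀ n, ∀ i < n + 1, F (n + 1) i = F n i) {i n : ℕ} (hin : i ≤ n) :
    F n i = F i i := by
  induction n, hin using Nat.le_induction with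
  | base => rfl
  | succ m him ih => rw [hF m i (Nat.lt_succ_of_le him), ih]

/-- **Existence of minimal bad sequences.** If a poset is well-founded but not noetherian
(i.e. it admits a bad sequence), then it admits a minimal bad sequence: a bad sequence
`x` such that for every `n` there is no bad sequence agreeing with `x` before `n` whose
`n`-th term is strictly smaller than `x n`. -/
theorem stmt_2 {X : Type*} [PartialOrder X]
    (hwf : WellFounded ((· < ·) : X → X → Prop))
    (hbad : ∃ x : ℕ → X, IsBadSeq x) :
    ∃ x : ℕ → X, IsBadSeq x ∧
      ∀ (n : ℕ) (y : ℕ → X), (∀ i < n, y i = x i) → y n < x n → ¬ IsBadSeq y := by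
  obtain ⟨f, hf⟩ := hbad
  choose! minimize agree bad minimal using
    fun n (g : ℕ → X) (hg : IsBadSeq g) => exists_isMinimalBadAt hwf hg n
  let F : ℕ → ℕ → X := fun n => Nat.rec (minimize 0 f) (fun k g => minimize (k + 1) g) n
  have hF_bad : ∀ n, IsBadSeq (F n) := fun n => by
    induction n with
    | zero => exact bad 0 f hf
    | succ n ih => exact bad (n + 1) (F n) ih
  have hF_min : ∀ n, IsMinimalBadAt n (F n) := fun n => by
    cases n with
    | zero => exact minimal 0 f hf
    | succ n => exact minimal (n + 1) (F n) (hF_bad n)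
  have hF_diag : ∀ {i n}, i ≤ n → F n i = F i i :=
    eq_diag_of_forall_lt_succ_eq F fun n => agree (n + 1) (F n) (hF_bad n)
  refine ⟨fun n => F n n, fun i j hij => ?_, fun n => ?_⟩
  · change ¬F i i ≤ F j j
    rw [← hF_diag hij.le]
    exact hF_bad j i j hij
  · exact (isMinimalBadAt_congr fun i hi => hF_diag hi).1 (hF_min n)
end

section
/- Let i : Ξ → Ξ' be a split injection of finitely generated free ℤ-modules, and let f be an element of the completed symmetric algebra of Ξ ⊗ ℚ. If the image of f in the completed symmetric algebra of Ξ' ⊗ ℚ under the map induced by i is of class K_N, then f is of class K_N. -/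
/-!
Choose a retraction `j` of `i`. The map induced by a `ℤ`-linear map is substitution of linear
forms with integer coefficients, so it is a ring homomorphism, functorial in the linear map, and it
sends polynomials with coefficients in `ℚ(ζ)` to such polynomials and `ℤ[ζ]`-linear forms to
`ℤ[ζ]`-linear forms. Applying `j_*` to `i_* F · ∏ (1 - λ_k) = f` therefore gives
`F · ∏ (1 - j_* λ_k) = j_* f`, since `j_* ∘ i_* = (j ∘ i)_* = id`.
-/

/-- The map on completed symmetric algebras (multivariate power series) induced by a
`ℤ`-linear map `i : ℤ^r → ℤ^{r'}`: each variable `t_k` is substituted by the linear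
form `∑_l (i e_k)_l t_l`.  Since the substituted forms are homogeneous of degree 1,
the coefficient of a monomial `d` in the image only involves coefficients of monomials
`m` of `F` with `|m| = |d|`, giving the finite sum below. -/
noncomputable def inducedMap {r r' : ℕ} (i : (Fin r → ℤ) →ₗ[ℤ] (Fin r' → ℤ))
    (F : MvPowerSeries (Fin r) ℂ) : MvPowerSeries (Fin r') ℂ :=
  fun d =>
    ∑ m ∈ (Finset.Iic
        (Finsupp.equivFunOnFinite.symm fun _ : Fin r => d.sum fun _ e => e)).filter
        (fun m => (m.sum fun _ e => e) = d.sum fun _ e => e),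
      MvPowerSeries.coeff m F *
        MvPolynomial.coeff d (∏ k : Fin r,
          (∑ l : Fin r', MvPolynomial.C ((i (Pi.single k 1) l : ℤ) : ℂ) *
            MvPolynomial.X l) ^ m k)

/-- A power series `h` in variables `t_1, …, t_r` is of class `K_N` (with respect to a
primitive `N`-th root of unity `ζ`) if `h = f / g` where `f, g` are polynomials with
coefficients in `ℚ(ζ)` and `g = ∏_k (1 - λ_k)` with each `λ_k` a `ℤ[ζ]`-linear
combination of the variables. -/
def IsKN (N : ℕ) (ζ : ℂ) {r : ℕ} (h : MvPowerSeries (Fin r) ℂ) : Prop :=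
  ∃ (f : MvPolynomial (Fin r) ℂ) (n : ℕ) (lam : Fin n → Fin r → ℂ),
    (∀ d, f.coeff d ∈ Algebra.adjoin ℚ ({ζ} : Set ℂ)) ∧
    (∀ k l, lam k l ∈ Algebra.adjoin ℤ ({ζ} : Set ℂ)) ∧
    h * ((∏ k, (1 - ∑ l, MvPolynomial.C (lam k l) * MvPolynomial.X l) :
        MvPolynomial (Fin r) ℂ) : MvPowerSeries (Fin r) ℂ)
      = (f : MvPowerSeries (Fin r) ℂ)

open MvPolynomial

theorem MvPolynomial.coe_aeval_eq_aeval_coe {σ τ R : Type*} [CommSemiring R]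
    (g : σ → MvPolynomial τ R) (p : MvPolynomial σ R) :
    ((aeval g p : MvPolynomial τ R) : MvPowerSeries τ R) =
      aeval (fun k => (g k : MvPowerSeries τ R)) p := by
  simpa using comp_aeval_apply (coeToMvPowerSeries.algHom R) p (f := g)

theorem MvPolynomial.mem_rangeS_map_subtype_iff {σ A : Type*} [CommSemiring A]
    {S : Subsemiring A} {q : MvPolynomial σ A} :
    q ∈ (map S.subtype).rangeS ↔ ∀ d, q.coeff d ∈ S := by
  rw [RingHom.mem_rangeS, ← Set.mem_range, mem_range_map_iff_coeffs_subset,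
    Subsemiring.coe_subtype, Subtype.range_coe]
  refine ⟨fun h d => ?_, fun h c hc => ?_⟩
  · by_cases hd : q.coeff d = 0
    · exact hd ▸ zero_mem S
    · exact h (coeff_mem_coeffs d hd)
  · obtain ⟨d, -, rfl⟩ := mem_coeffs_iff.1 hc
    exact h d

theorem MvPolynomial.coeff_aeval_mem {σ τ A : Type*} [CommSemiring A] {S : Subsemiring A}
    {p : MvPolynomial σ A} {g : σ → MvPolynomial τ A} (hp : ∀ m, p.coeff m ∈ S)
    (hg : ∀ k d, (g k).coeff d ∈ S) (d : τ →₀ ℕ) : (aeval g p).coeff d ∈ S := by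
  classical
  refine mem_rangeS_map_subtype_iff.1 (eval₂_mem (fun m _ => ?_) fun k => ?_) d
  · exact mem_rangeS_map_subtype_iff.2 fun e => by
      rw [algebraMap_eq, coeff_C]
      split_ifs
      exacts [hp m, zero_mem S]
  · exact mem_rangeS_map_subtype_iff.2 (hg k)

section ImageForm

variable {r r' r'' : ℕ}

noncomputable def imageForm (R : Type*) [CommRing R] (a : (Fin r → ℤ) →ₗ[ℤ] (Fin r' → ℤ))
    (k : Fin r) : MvPolynomial (Fin r') R :=
  ∑ l : Fin r', C ((a (Pi.single k 1) l : ℤ) : R) * X l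

variable {R : Type*} [CommRing R]

theorem aeval_imageForm_sum_C_mul_X (b : (Fin r' → ℤ) →ₗ[ℤ] (Fin r'' → ℤ)) (c : Fin r' → R) :
    aeval (imageForm R b) (∑ l, C (c l) * X l) =
      ∑ s, C (∑ l, c l * ((b (Pi.single l 1) s : ℤ) : R)) * X s := by
  simp only [imageForm, map_sum, map_mul, aeval_C, aeval_X, algebraMap_eq, Finset.mul_sum,
    Finset.sum_mul]
  rw [Finset.sum_comm]
  exact Finset.sum_congr rfl fun s _ => Finset.sum_congr rfl fun l _ => (mul_assoc _ _ _).symm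

theorem aeval_imageForm_imageForm (b : (Fin r' → ℤ) →ₗ[ℤ] (Fin r'' → ℤ))
    (a : (Fin r → ℤ) →ₗ[ℤ] (Fin r' → ℤ)) (k : Fin r) :
    aeval (imageForm R b) (imageForm R a k) = imageForm R (b ∘ₗ a) k := by
  refine (aeval_imageForm_sum_C_mul_X b _).trans (Finset.sum_congr rfl fun s _ => ?_)
  have h : (b ∘ₗ a) (Pi.single k 1) s = ∑ l, a (Pi.single k 1) l * b (Pi.single l 1) s := by
    rw [LinearMap.comp_apply, ← LinearMap.toMatrix'_mulVec, Matrix.mulVec, dotProduct]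
    simp [LinearMap.toMatrix'_apply, mul_comm]
  rw [h]
  push_cast
  rfl

theorem imageForm_id (k : Fin r) : imageForm R LinearMap.id k = X k := by
  rw [imageForm, Finset.sum_eq_single k (fun l _ hl => by simp [hl.symm]) (by simp)]
  simp

theorem isHomogeneous_imageForm (a : (Fin r → ℤ) →ₗ[ℤ] (Fin r' → ℤ)) (k : Fin r) :
    (imageForm R a k).IsHomogeneous 1 :=
  IsHomogeneous.sum _ _ _ fun _ _ => isHomogeneous_C_mul_X _ _

theorem isHomogeneous_prod_imageForm_pow (a : (Fin r → ℤ) →ₗ[ℤ] (Fin r' → ℤ))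
    (m : Fin r →₀ ℕ) : (∏ k, imageForm R a k ^ m k).IsHomogeneous m.degree := by
  rw [Finsupp.degree_eq_sum]
  exact IsHomogeneous.prod _ _ _ fun k _ => by
    simpa using (isHomogeneous_imageForm a k).pow (m k)

theorem coeff_imageForm_mem {S : Subring R}
    (a : (Fin r → ℤ) →ₗ[ℤ] (Fin r' → ℤ)) (k : Fin r) (d : Fin r' →₀ ℕ) :
    (imageForm R a k).coeff d ∈ S := by
  simp only [imageForm, coeff_sum, coeff_C_mul, coeff_X]
  exact sum_mem fun l _ => mul_mem (intCast_mem S _) (by split_ifs <;> simp [one_mem, zero_mem])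

end ImageForm

section InducedMap

variable {r r' r'' : ℕ}

theorem hasSubst_imageForm (a : (Fin r → ℤ) →ₗ[ℤ] (Fin r' → ℤ)) :
    MvPowerSeries.HasSubst fun k => (imageForm ℂ a k : MvPowerSeries (Fin r') ℂ) :=
  MvPowerSeries.hasSubst_of_constantCoeff_zero fun k => by
    rw [← MvPowerSeries.coeff_zero_eq_constantCoeff_apply, coeff_coe]
    exact (isHomogeneous_imageForm a k).coeff_eq_zero (by simp)

theorem inducedMap_eq_subst (a : (Fin r → ℤ) →ₗ[ℤ] (Fin r' → ℤ)) (F : MvPowerSeries (Fin r) ℂ) :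
    inducedMap a F = MvPowerSeries.subst (fun k => (imageForm ℂ a k : MvPowerSeries _ ℂ)) F := by
  ext d
  have hterm : ∀ m : Fin r →₀ ℕ, MvPowerSeries.coeff m F •
      MvPowerSeries.coeff d (m.prod fun k e => (imageForm ℂ a k : MvPowerSeries _ ℂ) ^ e) =
      MvPowerSeries.coeff m F * coeff d (∏ k, imageForm ℂ a k ^ m k) := by
    intro m
    rw [Finsupp.prod_fintype _ _ (by simp), smul_eq_mul]
    have hcoe := map_prod coeToMvPowerSeries.ringHom (fun k => imageForm ℂ a k ^ m k) .univ
    simp only [coeToMvPowerSeries.ringHom_apply, coe_pow] at hcoe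
    rw [← hcoe, coeff_coe]
  rw [MvPowerSeries.coeff_subst (hasSubst_imageForm a), funext hterm]
  symm
  refine (finsum_eq_sum_of_support_subset _ fun m hm => ?_).trans rfl
  have hdeg : m.degree = d.degree := by
    conv_rhs => rw [Finsupp.degree_eq_weight_one, ← Pi.one_def]
    exact ((isHomogeneous_prod_imageForm_pow a m) (right_ne_zero_of_mul hm)).symm
  refine Finset.mem_filter.2 ⟨Finset.mem_Iic.2 (Finsupp.le_def.2 fun k => ?_), hdeg⟩
  exact (Finsupp.le_degree k m).trans_eq hdeg

theorem inducedMap_mul (a : (Fin r → ℤ) →ₗ[ℤ] (Fin r' → ℤ)) (F G : MvPowerSeries (Fin r) ℂ) :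
    inducedMap a (F * G) = inducedMap a F * inducedMap a G := by
  simp only [inducedMap_eq_subst, MvPowerSeries.subst_mul (hasSubst_imageForm a)]

theorem inducedMap_coe (a : (Fin r → ℤ) →ₗ[ℤ] (Fin r' → ℤ)) (p : MvPolynomial (Fin r) ℂ) :
    inducedMap a p =
      ((aeval (imageForm ℂ a) p : MvPolynomial (Fin r') ℂ) : MvPowerSeries _ ℂ) := by
  rw [inducedMap_eq_subst, MvPowerSeries.subst_coe, coe_aeval_eq_aeval_coe]

theorem inducedMap_inducedMap (b : (Fin r' → ℤ) →ₗ[ℤ] (Fin r'' → ℤ))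
    (a : (Fin r → ℤ) →ₗ[ℤ] (Fin r' → ℤ)) (F : MvPowerSeries (Fin r) ℂ) :
    inducedMap b (inducedMap a F) = inducedMap (b ∘ₗ a) F := by
  simp only [inducedMap_eq_subst,
    MvPowerSeries.subst_comp_subst_apply (hasSubst_imageForm a) (hasSubst_imageForm b),
    MvPowerSeries.subst_coe, ← coe_aeval_eq_aeval_coe, aeval_imageForm_imageForm]

theorem inducedMap_id (F : MvPowerSeries (Fin r) ℂ) : inducedMap LinearMap.id F = F := by
  simp only [inducedMap_eq_subst, imageForm_id, coe_X, MvPowerSeries.subst_self, id]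

end InducedMap

theorem stmt_7_general {r r' : ℕ} (N : ℕ) (ζ : ℂ)
    (i : (Fin r → ℤ) →ₗ[ℤ] (Fin r' → ℤ))
    (hsplit : ∃ j : (Fin r' → ℤ) →ₗ[ℤ] (Fin r → ℤ), j.comp i = LinearMap.id)
    (F : MvPowerSeries (Fin r) ℂ)
    (hKN : IsKN N ζ (inducedMap i F)) :
    IsKN N ζ F := by
  obtain ⟨j, hj⟩ := hsplit
  obtain ⟨f, n, lam, hf, hlam, heq⟩ := hKN
  refine ⟨aeval (imageForm ℂ j) f, n, fun k m => ∑ l, lam k l * (j (Pi.single l 1) m : ℤ),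
    coeff_aeval_mem hf (coeff_imageForm_mem (S := (Algebra.adjoin ℚ {ζ}).toSubring) j),
    fun k m => sum_mem fun l _ => mul_mem (hlam k l) (intCast_mem _ _), ?_⟩
  have hpullback := congrArg (inducedMap j) heq
  rw [inducedMap_mul, inducedMap_inducedMap, hj, inducedMap_id, inducedMap_coe, inducedMap_coe,
    map_prod] at hpullback
  simp only [map_sub, map_one, aeval_imageForm_sum_C_mul_X] at hpullback
  exact hpullback

/-- **Class `K_N` descends along split injections.** Let `i : Ξ → Ξ'` be a split
injection of finitely generated free `ℤ`-modules (`Ξ = ℤ^r`, `Ξ' = ℤ^{r'}`), and let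
`F` be an element of the completed symmetric algebra of `Ξ ⊗ ℚ` (a power series with
rational coefficients).  If the image of `F` under the map induced by `i` is of class
`K_N`, then `F` is of class `K_N`. -/
theorem stmt_7 {r r' : ℕ} (N : ℕ) (ζ : ℂ) (hζ : IsPrimitiveRoot ζ N)
    (i : (Fin r → ℤ) →ₗ[ℤ] (Fin r' → ℤ))
    (hsplit : ∃ j : (Fin r' → ℤ) →ₗ[ℤ] (Fin r → ℤ), j.comp i = LinearMap.id)
    (F : MvPowerSeries (Fin r) ℂ)
    (hrat : ∀ d, MvPowerSeries.coeff d F ∈ Set.range (algebraMap ℚ ℂ))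
    (hKN : IsKN N ζ (inducedMap i F)) :
    IsKN N ζ F :=
  stmt_7_general N ζ i hsplit F hKN
end

section
/- Word order with weights is noetherian: Let L be a finite set and Λ a finite abelian group, Σ = L × Λ. For words x : [n] → Σ and y : [m] → Σ, define x ≤ y if there exists an ordered surjection f : [m] → [n] (meaning i < j implies min f^{-1}(i) < min f^{-1}(j)) such that the L-component of y equals the pullback along f of the L-component of x, and for each i ∈ [n], the Λ-component of x at i equals the sum over f^{-1}(i) of the Λ-component of y. Then (Σ^*, ≤) is a noetherian poset (well-quasi-order). -/
/-- The weighted subword order on words over `Σ = L × Λ`: `x ≤ y` iff there is an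
ordered surjection `f : [len y] → [len x]` (for `i < j`, `min f⁻¹(i) < min f⁻¹(j)`)
such that the `L`-component of `y` is the pullback along `f` of that of `x`, and the
`Λ`-component of `x` at each `i` is the sum of the `Λ`-components of `y` over the
fiber `f⁻¹(i)`. -/
def WeightedWordLE {L Λ : Type*} [AddCommMonoid Λ] (x y : List (L × Λ)) : Prop :=
  ∃ f : Fin y.length → Fin x.length,
    Function.Surjective f ∧
    (∀ i j : Fin x.length, i < j →
      ∃ b : Fin y.length, f b = i ∧ ∀ a : Fin y.length, f a = j → b < a) ∧
    (∀ a : Fin y.length, (y.get a).1 = (x.get (f a)).1) ∧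
    (∀ i : Fin x.length,
      (x.get i).2 = ∑ a ∈ Finset.univ.filter (fun a => f a = i), (y.get a).2)

/-!
Send a word `w` to its label weights `ℓ ↦ ∑_{w_k.1 = ℓ} w_k.2`, its set of labels, and the
word itself with each letter flagged by whether it is the first occurrence of its label. The
first two take finitely many values and the flagged word lives over a finite alphabet, so by
Higman's lemma every sequence has `i < j` on which the first two agree and flagged `x i` is a
subword of flagged `x j`. Such an embedding `e` extends to the required ordered surjection by
sending each letter of `x j` outside the image of `e` to the first occurrence in `x i` of its
label: this lies before it, since `e` maps first occurrences to first occurrences, and the added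
letters of each label have total weight zero since the label weights agree, so the fibre sums
are unchanged.
-/
open Finset

theorem Fintype.sum_eq_sum_comp_add_sum_compl_map {ι κ M : Type*} [Fintype ι] [Fintype κ]
    [DecidableEq κ] [AddCommMonoid M] (e : ι ↪ κ) (g : κ → M) :
    ∑ a, g a = ∑ k, g (e k) + ∑ a ∈ (univ.map e)ᶜ, g a := by
  rw [← sum_add_sum_compl (univ.map e), sum_map]

theorem List.wellQuasiOrdered_sublist_of_finite {α : Type*} [Finite α] :
    WellQuasiOrdered (List.Sublist (α := α)) := by
  intro l
  have hα : (Set.univ : Set α).PartiallyWellOrderedOn (· = ·) :=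
    Set.finite_univ.partiallyWellOrderedOn
  obtain ⟨m, n, hmn, h⟩ := (hα.partiallyWellOrderedOn_sublistForall₂ (· = ·)).exists_lt
    (f := l) fun _ _ _ => Set.mem_univ _
  obtain ⟨l', hl', hsub⟩ := List.sublistForall₂_iff.1 h
  rw [List.forall₂_eq_eq_eq] at hl'
  exact ⟨m, n, hmn, hl' ▸ hsub⟩

section

variable {L Λ : Type*}

def IsFirstOccurrence (w : List (L × Λ)) (k : Fin w.length) : Prop :=
  ∀ j < k, (w.get j).1 ≠ (w.get k).1

theorem IsFirstOccurrence.le_of_fst_eq {w : List (L × Λ)} {k a : Fin w.length}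
    (hk : IsFirstOccurrence w k) (h : (w.get a).1 = (w.get k).1) : k ≤ a :=
  not_lt.1 fun ha => hk a ha h

theorem IsFirstOccurrence.eq_of_fst_eq {w : List (L × Λ)} {k k' : Fin w.length}
    (hk : IsFirstOccurrence w k) (hk' : IsFirstOccurrence w k')
    (h : (w.get k).1 = (w.get k').1) : k = k' :=
  le_antisymm (hk.le_of_fst_eq h.symm) (hk'.le_of_fst_eq h)

theorem exists_isFirstOccurrence_fst_eq (w : List (L × Λ)) (a : Fin w.length) :
    ∃ k, IsFirstOccurrence w k ∧ (w.get k).1 = (w.get a).1 := by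
  induction a using WellFoundedLT.induction with
  | _ a ih =>
    by_cases ha : IsFirstOccurrence w a
    · exact ⟨a, ha, rfl⟩
    · obtain ⟨j, hja, hj⟩ : ∃ j < a, (w.get j).1 = (w.get a).1 := by
        simpa [IsFirstOccurrence] using ha
      obtain ⟨k, hk, hkj⟩ := ih j hja
      exact ⟨k, hk, hkj.trans hj⟩

def flagFirstOccurrences (w : List (L × Λ)) : List ((L × Λ) × Prop) :=
  List.ofFn fun k => (w.get k, IsFirstOccurrence w k)

theorem exists_orderEmbedding_of_flagFirstOccurrences_sublist {x y : List (L × Λ)}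
    (h : (flagFirstOccurrences x).Sublist (flagFirstOccurrences y)) :
    ∃ e : Fin x.length ↪o Fin y.length, ∀ k,
      y.get (e k) = x.get k ∧ (IsFirstOccurrence x k → IsFirstOccurrence y (e k)) := by
  obtain ⟨e, he⟩ := List.sublist_iff_exists_fin_orderEmbedding_get_eq.1 h
  refine ⟨(Fin.castOrderIso (by simp [flagFirstOccurrences])).toOrderEmbedding.trans
    (e.trans (Fin.castOrderIso (by simp [flagFirstOccurrences])).toOrderEmbedding), fun k => ?_⟩
  have hk := he (Fin.cast (by simp [flagFirstOccurrences]) k)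
  simp only [flagFirstOccurrences, List.get_ofFn, Prod.mk.injEq] at hk
  exact ⟨hk.1.symm, hk.2.mp⟩

def labelWeight [AddCommMonoid Λ] [DecidableEq L] (w : List (L × Λ)) (ℓ : L) : Λ :=
  ∑ k, if (w.get k).1 = ℓ then (w.get k).2 else 0

section Embedding

variable {x y : List (L × Λ)} (e : Fin x.length ↪o Fin y.length)

theorem exists_retraction_of_orderEmbedding
    (hlabels : Set.range (fun a => (y.get a).1) ⊆ Set.range fun k => (x.get k).1) :
    ∃ f : Fin y.length → Fin x.length, (∀ k, f (e k) = k) ∧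
      ∀ a ∉ Set.range e, IsFirstOccurrence x (f a) ∧ (x.get (f a)).1 = (y.get a).1 := by
  have key : ∀ a, ∃ k, (a ∈ Set.range e → e k = a) ∧
      (a ∉ Set.range e → IsFirstOccurrence x k ∧ (x.get k).1 = (y.get a).1) := by
    intro a
    by_cases ha : a ∈ Set.range e
    · obtain ⟨k, rfl⟩ := ha
      exact ⟨k, fun _ => rfl, fun h => (h ⟨k, rfl⟩).elim⟩
    · obtain ⟨k₀, hk₀⟩ := hlabels ⟨a, rfl⟩
      obtain ⟨k, hk, hkk₀⟩ := exists_isFirstOccurrence_fst_eq x k₀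
      exact ⟨k, fun h => (ha h).elim, fun _ => ⟨hk, hkk₀.trans hk₀⟩⟩
  choose f hf using key
  exact ⟨f, fun k => e.injective ((hf (e k)).1 ⟨k, rfl⟩), fun a ha => (hf a).2 ha⟩

variable [AddCancelCommMonoid Λ] [DecidableEq L]

theorem sum_compl_map_eq_zero_of_labelWeight_eq (he : ∀ k, y.get (e k) = x.get k)
    (hw : labelWeight x = labelWeight y) (ℓ : L) :
    ∑ a ∈ (univ.map e.toEmbedding)ᶜ, (if (y.get a).1 = ℓ then (y.get a).2 else 0) = 0 := by
  have h := congrFun hw ℓ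
  rw [labelWeight, labelWeight,
    Fintype.sum_eq_sum_comp_add_sum_compl_map e.toEmbedding] at h
  simp only [RelEmbedding.coe_toEmbedding, he] at h
  exact left_eq_add.1 h

theorem weightedWordLE_of_orderEmbedding (he : ∀ k, y.get (e k) = x.get k)
    (hfirst : ∀ k, IsFirstOccurrence x k → IsFirstOccurrence y (e k))
    (hlabels : Set.range (fun a => (y.get a).1) ⊆ Set.range fun k => (x.get k).1)
    (hw : labelWeight x = labelWeight y) :
    WeightedWordLE x y := by
  obtain ⟨f, hfe, hf⟩ := exists_retraction_of_orderEmbedding e hlabels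
  have fst_get_f (a : Fin y.length) : (x.get (f a)).1 = (y.get a).1 := by
    by_cases ha : a ∈ Set.range e
    · obtain ⟨k, rfl⟩ := ha
      rw [hfe, he]
    · exact (hf a ha).2
  have f_eq_iff {a : Fin y.length} (ha : a ∉ Set.range e) (k : Fin x.length) :
      f a = k ↔ IsFirstOccurrence x k ∧ (y.get a).1 = (x.get k).1 := by
    refine ⟨fun h => h ▸ ⟨(hf a ha).1, (fst_get_f a).symm⟩, fun ⟨hk, hak⟩ => ?_⟩
    exact (hf a ha).1.eq_of_fst_eq hk ((fst_get_f a).trans hak)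
  have e_f_le (a : Fin y.length) : e (f a) ≤ a := by
    by_cases ha : a ∈ Set.range e
    · obtain ⟨k, rfl⟩ := ha
      rw [hfe]
    · exact (hfirst _ (hf a ha).1).le_of_fst_eq (by rw [he, fst_get_f])
  refine ⟨f, fun k => ⟨e k, hfe k⟩, fun i j hij => ⟨e i, hfe i, fun a ha => ?_⟩,
    fun a => (fst_get_f a).symm, fun k => ?_⟩
  · exact (e.strictMono hij).trans_le (ha ▸ e_f_le a)
  have hcompl :
      ∑ a ∈ (univ.map e.toEmbedding)ᶜ, (if f a = k then (y.get a).2 else 0) = 0 := by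
    by_cases hk : IsFirstOccurrence x k
    · refine (sum_congr rfl fun a ha => ?_).trans
        (sum_compl_map_eq_zero_of_labelWeight_eq e he hw (x.get k).1)
      have ha : a ∉ Set.range e := by simpa using ha
      simp only [f_eq_iff ha, hk, true_and]
    · refine sum_eq_zero fun a ha => ?_
      have ha : a ∉ Set.range e := by simpa using ha
      simp only [f_eq_iff ha, hk, false_and, if_false]
  rw [sum_filter, Fintype.sum_eq_sum_comp_add_sum_compl_map e.toEmbedding, hcompl, add_zero]
  simp only [RelEmbedding.coe_toEmbedding, hfe, he, sum_ite_eq', mem_univ, if_true]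

end Embedding

theorem wellQuasiOrdered_weightedWordLE [Finite L] [AddCancelCommMonoid Λ] [Finite Λ] :
    WellQuasiOrdered (WeightedWordLE (L := L) (Λ := Λ)) := by
  classical
  intro x
  obtain ⟨i, j, hij, hinvariants, hsub⟩ :=
    ((Finite.wellQuasiOrdered (α := (L → Λ) × Set L) (· = ·)).prod
      List.wellQuasiOrdered_sublist_of_finite)
      fun n => ((labelWeight (x n), Set.range fun k => ((x n).get k).1),
        flagFirstOccurrences (x n))
  obtain ⟨hw, hlabels⟩ := Prod.mk.inj hinvariants
  obtain ⟨e, he⟩ := exists_orderEmbedding_of_flagFirstOccurrences_sublist hsub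
  exact ⟨i, j, hij, weightedWordLE_of_orderEmbedding e (fun k => (he k).1) (fun k => (he k).2)
    hlabels.ge hw⟩

end

/-- **Noetherianity of the weighted word order.** For `L` a finite set and `Λ` a finite
abelian group, the weighted subword order on words over `Σ = L × Λ` is a
well-quasi-order: every infinite sequence of words contains an increasing pair. -/
theorem stmt_14 {L Λ : Type*} [Fintype L] [AddCommGroup Λ] [Fintype Λ]
    (x : ℕ → List (L × Λ)) :
    ∃ i j : ℕ, i < j ∧ WeightedWordLE (x i) (x j) :=
  wellQuasiOrdered_weightedWordLE x
end

section
/- Let Σ = L × Λ with L finite and Λ a finite abelian group, and put r = |L|·(|Λ| + 2). For any word x = (s, σ) ∈ Σ^* of length at least r, there exist indices 1 ≤ β_1 < ⋯ < β_p < γ ≤ r (counting from the right end) such that s_{−β_1} = ⋯ = s_{−β_p} = s_{−γ} and σ_{−β_1} + ⋯ + σ_{−β_p} = 0 in Λ, with p ≥ 1. -/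
/-- **Zero-sum patterns in the tail of a word.** Let `Σ = L × Λ` with `L` finite and
`Λ` a finite abelian group, and put `r = |L|·(|Λ|+2)`.  Any word `x = (s, σ)` of length
`n ≥ r` admits indices `1 ≤ β₁ < ⋯ < β_p < γ ≤ r` (counted from the right end, so
position `-k` is the `0`-indexed position `n - k`) with `p ≥ 1`, all letters
`s_{-β_i}` and `s_{-γ}` equal, and `σ_{-β_1} + ⋯ + σ_{-β_p} = 0`. -/
theorem stmt_15 {L Λ : Type*} [Fintype L] [AddCommGroup Λ] [Fintype Λ]
    (r : ℕ) (hr : r = Fintype.card L * (Fintype.card Λ + 2))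
    (n : ℕ) (hn : r ≤ n) (s : ℕ → L) (σ : ℕ → Λ) :
    ∃ (p : ℕ) (β : Fin p → ℕ) (γ : ℕ), 0 < p ∧ StrictMono β ∧
      (∀ i, 1 ≤ β i ∧ β i < γ) ∧ γ ≤ r ∧
      (∀ i, s (n - β i) = s (n - γ)) ∧ ∑ i, σ (n - β i) = 0 := by
  classical
  have hL : 0 < Fintype.card L := Fintype.card_pos_iff.mpr ⟨s 0⟩
  obtain ⟨ℓ, -, hℓ⟩ := Finset.exists_lt_card_fiber_of_mul_lt_card_of_maps_to
    (s := Finset.Icc 1 r) (t := (Finset.univ : Finset L)) (f := fun k => s (n - k))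
    (n := Fintype.card Λ + 1)
    (fun a _ => Finset.mem_univ _)
    (by
      rw [Nat.card_Icc]
      simp only [Finset.card_univ, Nat.add_sub_cancel]
      rw [hr]
      nlinarith)
  set T := (Finset.Icc 1 r).filter (fun k => s (n - k) = ℓ) with hT
  set m := T.card with hm
  have hm2 : Fintype.card Λ + 2 ≤ m := hℓ
  have hTsub : ∀ k ∈ T, 1 ≤ k ∧ k ≤ r ∧ s (n - k) = ℓ := by
    intro k hk
    rw [hT, Finset.mem_filter, Finset.mem_Icc] at hk
    tauto
  let e := T.orderIsoOfFin rfl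
  let g : Fin m → ℕ := fun i => (e i : ℕ)
  have hgmono : StrictMono g := fun i j hij => e.strictMono hij
  have hgT : ∀ i, g i ∈ T := fun i => (e i).2
  -- prefix sums
  let f : ℕ → Λ := fun i => if h : i < m then σ (n - g ⟨i, h⟩) else 0
  let P : ℕ → Λ := fun j => ∑ i ∈ Finset.range j, f i
  obtain ⟨j₁, j₂, hne, hPeq⟩ := Fintype.exists_ne_map_eq_of_card_lt
    (fun j : Fin (Fintype.card Λ + 2) => P j) (by simp)
  -- wlog j₁ < j₂
  obtain ⟨a, b, hab, hPab⟩ : ∃ a b : Fin (Fintype.card Λ + 2), a < b ∧ P a = P b := by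
    rcases lt_or_gt_of_ne hne with h | h
    · exact ⟨j₁, j₂, h, hPeq⟩
    · exact ⟨j₂, j₁, h, hPeq.symm⟩
  have hbm : (b : ℕ) ≤ m - 1 := by
    have := b.2; omega
  have hblt : ∀ i : ℕ, (a : ℕ) + i < (b : ℕ) → (a : ℕ) + i < m := by
    intro i hi; omega
  have hm1 : m - 1 < m := by omega
  refine ⟨(b : ℕ) - a, fun i => g ⟨(a : ℕ) + i, hblt i (by omega)⟩, g ⟨m - 1, hm1⟩,
    by omega, ?_, ?_, ?_, ?_, ?_⟩
  · intro i j hij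
    have hij' : (i : ℕ) < (j : ℕ) := hij
    exact hgmono (Fin.mk_lt_mk.mpr (by omega))
  · intro i
    have h1 := (hTsub _ (hgT ⟨(a : ℕ) + i, hblt i (by omega)⟩)).1
    have h2 : g ⟨(a : ℕ) + i, hblt i (by omega)⟩ < g ⟨m - 1, hm1⟩ := by
      apply hgmono
      rw [Fin.mk_lt_mk]
      have := i.2; omega
    exact ⟨h1, h2⟩
  · exact (hTsub _ (hgT ⟨m - 1, hm1⟩)).2.1
  · intro i
    rw [(hTsub _ (hgT _)).2.2, (hTsub _ (hgT _)).2.2]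
  · have key : ∀ i : Fin ((b : ℕ) - a), σ (n - g ⟨(a : ℕ) + i, hblt i (by omega)⟩)
        = f ((a : ℕ) + i) := by
      intro i
      simp only [f]
      rw [dif_pos (hblt i (by omega))]
    calc ∑ i : Fin ((b : ℕ) - a), σ (n - g ⟨(a : ℕ) + i, hblt i (by omega)⟩)
        = ∑ i : Fin ((b : ℕ) - a), f ((a : ℕ) + i) := by
          exact Finset.sum_congr rfl fun i _ => key i
      _ = ∑ i ∈ Finset.range ((b : ℕ) - a), f ((a : ℕ) + i) := by
          exact Fin.sum_univ_eq_sum_range (fun i => f ((a : ℕ) + i)) _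
      _ = ∑ i ∈ Finset.Ico (a : ℕ) (b : ℕ), f i := by
          rw [Finset.sum_Ico_eq_sum_range]
      _ = P b - P a := by
          rw [Finset.sum_Ico_eq_sub _ (le_of_lt hab)]
      _ = 0 := by rw [← hPab, sub_self]
end

section
/- Let Σ = L × Λ (L finite, Λ a finite abelian group), fix θ : L → Λ, and let K_θ be the set of words w in Σ^* such that for each a ∈ L, the sum of the Λ-components of w at positions whose L-component equals a is θ(a). Let x = (s, σ) ∈ K_θ of length n and define the ordered language L(x) = (s_1/σ_1) Π_1^* (s_2/σ_2) Π_2^* ⋯ (s_n/σ_n) Π_n^*, where Π_i = {s_1, …, s_i} × Λ. Then for every word y ∈ L(x) ∩ K_θ, one has x ≤ y in the weighted subword order (as in Theorem on Σ^* noetherianity). -/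
/-- `w ∈ K_θ` : for each `a ∈ L`, the `Λ`-components of `w` at positions whose
`L`-component is `a` sum to `θ a`. -/
def MemKtheta {L Λ : Type*} [DecidableEq L] [AddCommMonoid Λ] (θ : L → Λ)
    (w : List (L × Λ)) : Prop :=
  ∀ a : L, ((w.filter (fun c => c.1 = a)).map Prod.snd).sum = θ a

/-- `y` lies in the ordered language
`L(x) = (s₁/σ₁) Π₁^* (s₂/σ₂) Π₂^* ⋯ (s_n/σ_n) Π_n^*`, where
`Π_i = {s₁, …, s_i} × Λ`. -/
def MemLangOf {L Λ : Type*} (x y : List (L × Λ)) : Prop :=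
  ∃ w : Fin x.length → List (L × Λ),
    (∀ i : Fin x.length, ∀ c ∈ w i, ∃ j : Fin x.length, j ≤ i ∧ c.1 = (x.get j).1) ∧
    y = (List.ofFn fun i => x.get i :: w i).flatten

/-!
Map the distinguished letter `(sᵢ/σᵢ)` of `y` to `i`, and every letter inserted from `Π_k^*`
to the first position of `x` carrying the same `L`-letter, which lies at or before `k`. Then
the least preimage of `i` is the distinguished letter of block `i`, so these minima increase.
A position `i` of `x` that is not the first occurrence of its letter receives only `(sᵢ/σᵢ)`;
a first occurrence of `a` also receives every inserted letter `a`, and those weigh `0` in total,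
since the `a`-weight of `y` is that of `x` plus theirs and both equal `θ a`.
-/

/-- `Z` is `y` with every position labelled by its image under the surjection. -/
theorem weightedWordLE_map_fst {L Λ : Type*} [AddCommMonoid Λ] (x : List (L × Λ))
    (Z : List ((L × Λ) × Fin x.length))
    (hsplit : ∀ i, ∃ A c B, Z = A ++ (c, i) :: B ∧ ∀ q ∈ A, q.2 < i)
    (hletter : ∀ q ∈ Z, q.1.1 = (x.get q.2).1)
    (hweight : ∀ i, (x.get i).2 = (Z.map fun q => if q.2 = i then q.1.2 else 0).sum) :
    WeightedWordLE x (Z.map Prod.fst) := by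
  have hlen : (Z.map Prod.fst).length = Z.length := List.length_map _
  let f : Fin (Z.map Prod.fst).length → Fin x.length := fun p => (Z[p.1]'(hlen ▸ p.2)).2
  have hsplit_at : ∀ i, ∃ A c B, Z = A ++ (c, i) :: B ∧ (∀ q ∈ A, q.2 < i) ∧
      ∃ h : A.length < Z.length, Z[A.length] = (c, i) := by
    intro i
    obtain ⟨A, c, B, rfl, hA⟩ := hsplit i
    exact ⟨A, c, B, rfl, hA, by simp, by simp⟩
  refine ⟨f, ?surj, ?order, ?letter, ?weight⟩
  case surj =>
    intro i
    obtain ⟨A, c, B, -, -, hA, hZ⟩ := hsplit_at i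
    exact ⟨⟨A.length, hlen ▸ hA⟩, by simp [f, hZ]⟩
  case order =>
    intro i j hij
    obtain ⟨A, c, B, hZ, hA, hAlen, hZA⟩ := hsplit_at i
    refine ⟨⟨A.length, hlen ▸ hAlen⟩, by simp [f, hZA], fun p hp => ?_⟩
    by_contra! hle
    rcases (Fin.le_iff_val_le_val.mp hle).lt_or_eq with hlt | heq
    · have hmem : Z[p.1]'(hlen ▸ p.2) ∈ A := by
        simp only [hZ, List.getElem_append_left hlt]
        exact List.getElem_mem _
      have hpi := hA _ hmem
      simp only [f] at hp
      exact absurd (hp ▸ hpi) (not_lt.mpr hij.le)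
    · simp only [f, heq, hZA] at hp
      exact hij.ne hp
  case letter =>
    intro p
    simpa [f] using hletter _ (List.getElem_mem _)
  case weight =>
    intro i
    rw [Finset.sum_filter, hweight i, ← Fin.sum_univ_fun_getElem,
      ← (finCongr hlen).sum_comp]
    simp [f]

theorem List.exists_flatten_ofFn_eq_append_cons {α : Type*} {n : ℕ} (a : Fin n → α)
    (t : Fin n → List (α × Fin n)) (ht : ∀ k, ∀ q ∈ t k, q.2 ≤ k) (i : Fin n) :
    ∃ A B, (List.ofFn fun k => (a k, k) :: t k).flatten = A ++ (a i, i) :: B ∧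
      ∀ q ∈ A, q.2 < i := by
  set blocks := List.ofFn fun k => (a k, k) :: t k
  have hi : i.1 < blocks.length := by simp [blocks]
  refine ⟨(blocks.take i).flatten, t i ++ (blocks.drop (i + 1)).flatten, ?_, ?_⟩
  · conv_lhs => rw [← List.take_append_drop i blocks, List.drop_eq_getElem_cons hi]
    simp [blocks]
  · intro q hq
    obtain ⟨l, hl, hql⟩ := List.mem_flatten.mp hq
    obtain ⟨m, hm, rfl⟩ := List.getElem_of_mem hl
    simp only [List.length_take, lt_min_iff] at hm
    simp only [List.getElem_take, blocks, List.getElem_ofFn, List.mem_cons] at hql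
    rcases hql with rfl | hq
    · exact hm.1
    · exact lt_of_le_of_lt (ht _ q hq) hm.1

section Letters

variable {L Λ : Type*} [DecidableEq L]

theorem memKtheta_iff_sum_map_ite [AddCommMonoid Λ] (θ : L → Λ) (w : List (L × Λ)) :
    MemKtheta θ w ↔ ∀ a, (w.map fun c => if c.1 = a then c.2 else 0).sum = θ a := by
  simp [MemKtheta, List.sum_map_ite]

theorem MemKtheta.sum_inserted_eq_zero [AddCommMonoid Λ] [IsLeftCancelAdd Λ] {θ : L → Λ}
    {x : List (L × Λ)} (w : Fin x.length → List (L × Λ)) (hx : MemKtheta θ x)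
    (hy : MemKtheta θ (List.ofFn fun k => x.get k :: w k).flatten) (a : L) :
    ∑ k, ((w k).map fun c => if c.1 = a then c.2 else 0).sum = 0 := by
  rw [memKtheta_iff_sum_map_ite] at hx hy
  have hsplit := hy a
  rw [← hx a, List.map_flatten, List.sum_flatten, List.map_ofFn, List.map_ofFn,
    List.sum_ofFn] at hsplit
  have hx_sum := Fin.sum_univ_fun_getElem x fun c => if c.1 = a then c.2 else 0
  simp only [Function.comp_apply, List.map_cons, List.sum_cons, Finset.sum_add_distrib,
    List.get_eq_getElem] at hsplit hx_sum
  rw [hx_sum] at hsplit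
  exact add_eq_left.mp hsplit

def firstIndex (x : List (L × Λ)) (a : L) (default : Fin x.length) : Fin x.length :=
  if h : ∃ j, (x.get j).1 = a then Fin.find (fun j => (x.get j).1 = a) h else default

variable {x : List (L × Λ)} {a : L} {j : Fin x.length}

theorem get_firstIndex (d : Fin x.length) (hj : (x.get j).1 = a) :
    (x.get (firstIndex x a d)).1 = a := by
  rw [firstIndex, dif_pos ⟨j, hj⟩]
  exact Fin.find_spec (p := fun j => (x.get j).1 = a) _

theorem firstIndex_le (d : Fin x.length) (hj : (x.get j).1 = a) : firstIndex x a d ≤ j := by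
  rw [firstIndex, dif_pos ⟨j, hj⟩]
  exact Fin.find_le_of_pos _ hj

theorem firstIndex_eq_iff (d : Fin x.length) (hj : (x.get j).1 = a) (i : Fin x.length) :
    firstIndex x a d = i ↔ (x.get i).1 = a ∧ ∀ k < i, (x.get k).1 ≠ (x.get i).1 := by
  rw [firstIndex, dif_pos ⟨j, hj⟩, Fin.find_eq_iff]
  exact and_congr_right fun hi => by subst hi; rfl

end Letters

section LabelledWord

variable {L Λ : Type*} [DecidableEq L] {x : List (L × Λ)} (w : Fin x.length → List (L × Λ))

def labelledWord : List ((L × Λ) × Fin x.length) :=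
  (List.ofFn fun k => (x.get k, k) :: (w k).map fun c => (c, firstIndex x c.1 k)).flatten

theorem map_fst_labelledWord :
    (labelledWord w).map Prod.fst = (List.ofFn fun k => x.get k :: w k).flatten := by
  simp [labelledWord, List.map_flatten, Function.comp_def]

variable {w}
variable (hw : ∀ k, ∀ c ∈ w k, ∃ j ≤ k, c.1 = (x.get j).1)
include hw

theorem labelledWord_split (i : Fin x.length) :
    ∃ A c B, labelledWord w = A ++ (c, i) :: B ∧ ∀ q ∈ A, q.2 < i := by
  have hle : ∀ k, ∀ q ∈ (w k).map (fun c => (c, firstIndex x c.1 k)), q.2 ≤ k := by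
    intro k q hq
    obtain ⟨c, hc, rfl⟩ := List.mem_map.mp hq
    obtain ⟨j, hjk, hj⟩ := hw k c hc
    exact (firstIndex_le k hj.symm).trans hjk
  obtain ⟨A, B, hAB, hA⟩ := List.exists_flatten_ofFn_eq_append_cons _ _ hle i
  exact ⟨A, _, B, hAB, hA⟩

theorem labelledWord_letter : ∀ q ∈ labelledWord w, q.1.1 = (x.get q.2).1 := by
  intro q hq
  obtain ⟨_, hl, hq⟩ := List.mem_flatten.mp hq
  obtain ⟨k, rfl⟩ := List.mem_ofFn.mp hl
  obtain rfl | hq := List.mem_cons.mp hq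
  · rfl
  obtain ⟨c, hc, rfl⟩ := List.mem_map.mp hq
  obtain ⟨j, -, hj⟩ := hw k c hc
  exact (get_firstIndex k hj.symm).symm

theorem labelledWord_weight [AddCommMonoid Λ]
    (hzero : ∀ a, ∑ k, ((w k).map fun c => if c.1 = a then c.2 else 0).sum = 0)
    (i : Fin x.length) :
    (x.get i).2 = ((labelledWord w).map fun q => if q.2 = i then q.1.2 else 0).sum := by
  have hinserted : ∀ k, ((w k).map fun c => if firstIndex x c.1 k = i then c.2 else 0) =
      (w k).map fun c => if ∀ j < i, (x.get j).1 ≠ (x.get i).1 then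
        (if c.1 = (x.get i).1 then c.2 else 0) else 0 := by
    intro k
    refine List.map_congr_left fun c hc => ?_
    obtain ⟨j, -, hj⟩ := hw k c hc
    rw [← ite_and]
    exact if_congr ((firstIndex_eq_iff k hj.symm i).trans (by rw [eq_comm, and_comm])) rfl rfl
  rw [labelledWord, List.map_flatten, List.sum_flatten, List.map_ofFn, List.map_ofFn,
    List.sum_ofFn]
  simp only [Function.comp_def, List.map_cons, List.sum_cons, List.map_map,
    Finset.sum_add_distrib, Finset.sum_ite_eq', Finset.mem_univ, if_true, hinserted]
  by_cases hfirst : ∀ j < i, (x.get j).1 ≠ (x.get i).1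
  · simp only [if_pos hfirst, hzero, add_zero]
  · simp only [if_neg hfirst, List.map_const', List.sum_replicate, smul_zero,
      Finset.sum_const_zero, add_zero]

end LabelledWord

theorem stmt_18_general {L Λ : Type*} [DecidableEq L] [AddCommGroup Λ]
    (θ : L → Λ) (x y : List (L × Λ))
    (hx : MemKtheta θ x) (hyL : MemLangOf x y) (hyK : MemKtheta θ y) :
    WeightedWordLE x y := by
  obtain ⟨w, hw, rfl⟩ := hyL
  rw [← map_fst_labelledWord]
  exact weightedWordLE_map_fst x _ (labelledWord_split hw) (labelledWord_letter hw)
    (labelledWord_weight hw (hx.sum_inserted_eq_zero w hyK))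

/-- **Words of `L(x) ∩ K_θ` dominate `x`.** For `x ∈ K_θ` of length `n` and any
`y ∈ L(x) ∩ K_θ`, one has `x ≤ y` in the weighted subword order. -/
theorem stmt_18 {L Λ : Type*} [Fintype L] [DecidableEq L] [AddCommGroup Λ] [Fintype Λ]
    (θ : L → Λ) (x y : List (L × Λ))
    (hx : MemKtheta θ x) (hyL : MemLangOf x y) (hyK : MemKtheta θ y) :
    WeightedWordLE x y :=
  stmt_18_general θ x y hx hyL hyK
end
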